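/- arXiv:math/0003109 — 4 statements merged into one kernel-verified Lean document; each statement's English description precedes it below -/
import Mathlib

section
/- For every x ∈ h₀ there exists a unique element C_T(x) ∈ h₀ such that (α − Tα, C_T(x)) = (α + Tα, x) for all α ∈ Γ₁, and the resulting map C_T : h₀ → h₀ is linear (the Cayley transform associated to the generalized Belavin–Drinfeld triple). -/
open scoped RealInnerProductSpace

/-- **Cayley transform, existence, uniqueness and linearity.**
Let `V` be a finite-dimensional real inner product space, `(Γ₁, Γ₂, T)` a generalized
Belavin–Drinfeld triple (so `T : Γ₁ → Γ₂` is a bijection preserving inner products),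
and `h₀ = span ℝ {α - Tα : α ∈ Γ₁}`.  Then for every `x ∈ h₀` there is a unique
`c ∈ h₀` with `⟪α - Tα, c⟫ = ⟪α + Tα, x⟫` for all `α ∈ Γ₁`, and the resulting map
`C_T : h₀ → h₀` is linear. -/
theorem cayley_transform_existsUnique_and_linear
    {V : Type*} [NormedAddCommGroup V] [InnerProductSpace ℝ V]
    [FiniteDimensional ℝ V]
    (Γ₁ Γ₂ : Finset V) (T : V → V)
    (hT : Set.BijOn T (Γ₁ : Set V) (Γ₂ : Set V))
    (hTorth : ∀ α ∈ Γ₁, ∀ β ∈ Γ₁, ⟪T α, T β⟫ = ⟪α, β⟫)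
    (h₀ : Submodule ℝ V)
    (hh₀ : h₀ = Submodule.span ℝ ((fun α => α - T α) '' (Γ₁ : Set V))) :
    (∀ x ∈ h₀, ∃! c : V, c ∈ h₀ ∧
      ∀ α ∈ Γ₁, ⟪α - T α, c⟫ = ⟪α + T α, x⟫) ∧
    ∃ C : h₀ →ₗ[ℝ] h₀, ∀ (x : h₀) (α : V), α ∈ Γ₁ →
      ⟪α - T α, (C x : V)⟫ = ⟪α + T α, (x : V)⟫ := by
  classical
  set K : Submodule ℝ (V × V) :=
    Submodule.span ℝ ((fun α => (α - T α, α + T α)) '' (Γ₁ : Set V)) with hK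
  have hgen : ∀ α ∈ Γ₁, α - T α ∈ h₀ := by
    intro α hα; rw [hh₀]; exact Submodule.subset_span ⟨α, hα, rfl⟩
  -- key antisymmetry identity on K
  have key : ∀ p ∈ K, ∀ β ∈ Γ₁, ⟪p.2, β - T β⟫ = -⟪p.1, β + T β⟫ := by
    intro p hp
    induction hp using Submodule.span_induction with
    | mem q hq =>
      obtain ⟨α, hα, rfl⟩ := hq
      intro β hβ
      have h1 := hTorth α hα β hβ
      have h2 := real_inner_comm α β
      simp only [inner_add_left, inner_sub_left, inner_add_right, inner_sub_right]
      linarith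
    | zero => intro β hβ; simp
    | add q r hq hr ihq ihr =>
      intro β hβ
      simp only [Prod.snd_add, Prod.fst_add, inner_add_left]
      rw [ihq β hβ, ihr β hβ]; ring
    | smul a q hq ih =>
      intro β hβ
      simp only [Prod.smul_snd, Prod.smul_fst, real_inner_smul_left]
      rw [ih β hβ]; ring
  have hmap : Submodule.map (LinearMap.fst ℝ V V) K = h₀ := by
    rw [hK, Submodule.map_span, hh₀, ← Set.image_comp]
    rfl
  -- uniqueness helper
  have huniq : ∀ c₁ ∈ h₀, ∀ c₂ ∈ h₀,
      (∀ α ∈ Γ₁, ⟪α - T α, c₁⟫ = ⟪α - T α, c₂⟫) → c₁ = c₂ := by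
    intro c₁ hc₁ c₂ hc₂ h
    have hd : c₁ - c₂ ∈ h₀ := sub_mem hc₁ hc₂
    have horth : ∀ v ∈ h₀, ⟪v, c₁ - c₂⟫ = 0 := by
      intro v hv
      rw [hh₀] at hv
      induction hv using Submodule.span_induction with
      | mem q hq =>
        obtain ⟨α, hα, rfl⟩ := hq
        rw [inner_sub_right, h α hα, sub_self]
      | zero => simp
      | add q r hq hr ihq ihr => rw [inner_add_left, ihq, ihr, add_zero]
      | smul a q hq ih => rw [real_inner_smul_left, ih, mul_zero]
    have h0 : ⟪c₁ - c₂, c₁ - c₂⟫ = 0 := horth _ hd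
    have := inner_self_eq_zero.mp h0
    exact sub_eq_zero.mp this
  -- existence
  have hex : ∀ x ∈ h₀, ∃ c ∈ h₀, ∀ α ∈ Γ₁, ⟪α - T α, c⟫ = ⟪α + T α, x⟫ := by
    intro x hx
    rw [← hmap] at hx
    obtain ⟨p, hpK, hp1⟩ := hx
    refine ⟨-(h₀.orthogonalProjectionOnto p.2 : V), neg_mem (Submodule.coe_mem _), ?_⟩
    intro β hβ
    have hproj := Submodule.inner_orthogonalProjectionOnto_eq_of_mem_left (K := h₀)
      ⟨β - T β, hgen β hβ⟩ p.2
    rw [Submodule.coe_inner] at hproj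
    have hp1' : p.1 = x := hp1
    rw [inner_neg_right, hproj, real_inner_comm, key p hpK β hβ, neg_neg,
      real_inner_comm, hp1']
  have hEU : ∀ x ∈ h₀, ∃! c : V, c ∈ h₀ ∧
      ∀ α ∈ Γ₁, ⟪α - T α, c⟫ = ⟪α + T α, x⟫ := by
    intro x hx
    obtain ⟨c, hc, hcp⟩ := hex x hx
    refine ⟨c, ⟨hc, hcp⟩, ?_⟩
    intro c' ⟨hc', hcp'⟩
    exact huniq c' hc' c hc (fun α hα => by rw [hcp α hα, hcp' α hα])
  refine ⟨hEU, ?_⟩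
  -- build the linear map by choice + uniqueness
  have spec : ∀ x : h₀, ((hEU x.1 x.2).choose ∈ h₀) ∧
      ∀ α ∈ Γ₁, ⟪α - T α, (hEU x.1 x.2).choose⟫ = ⟪α + T α, (x : V)⟫ :=
    fun x => (hEU x.1 x.2).choose_spec.1
  have unique : ∀ (x : h₀) (c : V), c ∈ h₀ →
      (∀ α ∈ Γ₁, ⟪α - T α, c⟫ = ⟪α + T α, (x : V)⟫) →
      c = (hEU x.1 x.2).choose :=
    fun x c hc hcp => (hEU x.1 x.2).choose_spec.2 c ⟨hc, hcp⟩
  refine ⟨{ toFun := fun x => ⟨(hEU x.1 x.2).choose, (spec x).1⟩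
            map_add' := ?_
            map_smul' := ?_ }, ?_⟩
  · intro x y
    refine Subtype.ext (unique (x + y) _ (add_mem (spec x).1 (spec y).1) ?_).symm
    intro α hα
    rw [inner_add_right, (spec x).2 α hα, (spec y).2 α hα,
      Submodule.coe_add, inner_add_right]
  · intro a x
    refine Subtype.ext (unique (a • x) _ (Submodule.smul_mem _ a (spec x).1) ?_).symm
    intro α hα
    rw [real_inner_smul_right, (spec x).2 α hα,
      Submodule.coe_smul, real_inner_smul_right]
  · intro x α hα
    exact (spec x).2 α hα
end

section
/- The Cayley transform C_T : h₀ → h₀, i.e. the unique linear map satisfying (α − Tα, C_T(x)) = (α + Tα, x) for all α ∈ Γ₁ and x ∈ h₀, is skew-symmetric with respect to the inner product: (C_T(x), y) = −(x, C_T(y)) for all x, y ∈ h₀. -/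
open scoped RealInnerProductSpace

/-- **Skew-symmetry of the Cayley transform.**
The Cayley transform `C_T : h₀ → h₀`, i.e. the (unique) linear map satisfying
`⟪α - Tα, C_T x⟫ = ⟪α + Tα, x⟫` for all `α ∈ Γ₁` and `x ∈ h₀`, is skew-symmetric:
`⟪C_T x, y⟫ = -⟪x, C_T y⟫` for all `x, y ∈ h₀`. -/
theorem cayley_transform_skew_symmetric
    {V : Type*} [NormedAddCommGroup V] [InnerProductSpace ℝ V]
    [FiniteDimensional ℝ V]
    (Γ₁ Γ₂ : Finset V) (T : V → V)
    (hT : Set.BijOn T (Γ₁ : Set V) (Γ₂ : Set V))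
    (hTorth : ∀ α ∈ Γ₁, ∀ β ∈ Γ₁, ⟪T α, T β⟫ = ⟪α, β⟫)
    (h₀ : Submodule ℝ V)
    (hh₀ : h₀ = Submodule.span ℝ ((fun α => α - T α) '' (Γ₁ : Set V)))
    (C : h₀ →ₗ[ℝ] h₀)
    (hC : ∀ (x : h₀) (α : V), α ∈ Γ₁ →
      ⟪α - T α, (C x : V)⟫ = ⟪α + T α, (x : V)⟫)
    (x y : h₀) :
    ⟪(C x : V), (y : V)⟫ = -⟪(x : V), (C y : V)⟫ := by
  set S : Set V := (fun α => α - T α) '' (Γ₁ : Set V) with hS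
  have key : ∀ α ∈ Γ₁, ∀ β ∈ Γ₁,
      ⟪β + T β, α - T α⟫ + ⟪α + T α, β - T β⟫ = 0 := by
    intro α hα β hβ
    have h1 := hTorth α hα β hβ
    have h2 := hTorth β hβ α hα
    have c1 := real_inner_comm α β
    have c2 := real_inner_comm (T α) (T β)
    have c3 := real_inner_comm α (T β)
    have c4 := real_inner_comm β (T α)
    simp only [inner_add_left, inner_sub_right]
    linarith
  have hSsub : S ⊆ (h₀ : Set V) := by
    rw [hh₀]; exact Submodule.subset_span
  set s : Set h₀ := Subtype.val ⁻¹' S with hs_def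
  have hs : Submodule.span ℝ s = ⊤ := by
    apply Submodule.map_injective_of_injective h₀.injective_subtype
    rw [Submodule.map_span, Submodule.map_top, Submodule.range_subtype]
    have : h₀.subtype '' s = S := by
      ext v
      constructor
      · rintro ⟨⟨w, hw⟩, hws, rfl⟩; exact hws
      · intro hv; exact ⟨⟨v, hSsub hv⟩, hv, rfl⟩
    rw [this, ← hh₀]
  have hmem : ∀ z : h₀, z ∈ Submodule.span ℝ s := fun z => hs ▸ Submodule.mem_top
  -- step 1: for z a generator and any x
  have step1 : ∀ (z : h₀), (z : V) ∈ S → ∀ (x : h₀),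
      ⟪(C x : V), (z : V)⟫ + ⟪(x : V), (C z : V)⟫ = 0 := by
    intro z hz x
    obtain ⟨β, hβ, hzv⟩ := hz
    induction hmem x using Submodule.span_induction with
    | mem w hw =>
      obtain ⟨α, hα, hwv⟩ := hw
      have e1 := hC w β hβ
      have e2 := hC z α hα
      have hzv' : (z : V) = β - T β := hzv.symm
      have hwv' : (w : V) = α - T α := hwv.symm
      have c1 := real_inner_comm ((C w : V)) (β - T β)
      rw [hzv'] at e2
      rw [hzv', c1.symm, e1, hwv', e2]
      exact key α hα β hβ
    | zero => simp
    | add a b ha hb iha ihb =>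
      have : ((C (a + b) : h₀) : V) = (C a : V) + (C b : V) := by
        rw [map_add]; rfl
      rw [this]
      have ha' : ((a + b : h₀) : V) = (a : V) + (b : V) := rfl
      rw [ha']
      rw [inner_add_left, inner_add_left]
      linarith
    | smul r a ha iha =>
      have : ((C (r • a) : h₀) : V) = r • (C a : V) := by
        rw [map_smul]; rfl
      rw [this]
      have ha' : ((r • a : h₀) : V) = r • (a : V) := rfl
      rw [ha', inner_smul_left, inner_smul_left, ← mul_add, iha, mul_zero]
  -- step 2: general x, y
  have step2 : ∀ (x y : h₀),
      ⟪(C x : V), (y : V)⟫ + ⟪(x : V), (C y : V)⟫ = 0 := by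
    intro x y
    induction hmem y using Submodule.span_induction with
    | mem w hw => exact step1 w hw x
    | zero => simp
    | add a b ha hb iha ihb =>
      have : ((C (a + b) : h₀) : V) = (C a : V) + (C b : V) := by
        rw [map_add]; rfl
      rw [this]
      have ha' : ((a + b : h₀) : V) = (a : V) + (b : V) := rfl
      rw [ha', inner_add_right, inner_add_right]
      linarith
    | smul r a ha iha =>
      have : ((C (r • a) : h₀) : V) = r • (C a : V) := by
        rw [map_smul]; rfl
      rw [this]
      have ha' : ((r • a : h₀) : V) = r • (a : V) := rfl
      rw [ha', inner_smul_right, inner_smul_right, ← mul_add, iha, mul_zero]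
  linarith [step2 x y]
end

section
/- Assume V = span_ℝ(Γ₁) + l. Then there exists a unique linear map B : V → V such that B(α) = T(α) for every α ∈ Γ₁ and B(x) = x for every x ∈ l; moreover B is an orthogonal operator, i.e. (B(x), B(y)) = (x, y) for all x, y ∈ V. -/
open scoped RealInnerProductSpace

private lemma aux_inner_sum_sum {V : Type*} [NormedAddCommGroup V] [InnerProductSpace ℝ V]
    {ι : Type*} (s : Finset ι) (a : ι → ℝ) (v w : ι → V) :
    ⟪∑ i ∈ s, a i • v i, ∑ j ∈ s, a j • w j⟫ =
      ∑ i ∈ s, ∑ j ∈ s, a i * (a j * ⟪v i, w j⟫) := by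
  rw [sum_inner]
  refine Finset.sum_congr rfl fun i _ => ?_
  rw [real_inner_smul_left, inner_sum, Finset.mul_sum]
  exact Finset.sum_congr rfl fun j _ => by rw [real_inner_smul_right]

/-- **Existence, uniqueness and orthogonality of the extension `B`.**
Assume `V = span ℝ Γ₁ + l`, where `l = h₀ᗮ` and `h₀ = span ℝ {α - Tα : α ∈ Γ₁}`.
Then there is a unique linear map `B : V → V` with `B α = T α` for `α ∈ Γ₁` and
`B x = x` for `x ∈ l`; moreover `B` is orthogonal. -/
theorem exists_unique_orthogonal_extension
    {V : Type*} [NormedAddCommGroup V] [InnerProductSpace ℝ V]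
    [FiniteDimensional ℝ V]
    (Γ₁ Γ₂ : Finset V) (T : V → V)
    (hT : Set.BijOn T (Γ₁ : Set V) (Γ₂ : Set V))
    (hTorth : ∀ α ∈ Γ₁, ∀ β ∈ Γ₁, ⟪T α, T β⟫ = ⟪α, β⟫)
    (h₀ l : Submodule ℝ V)
    (hh₀ : h₀ = Submodule.span ℝ ((fun α => α - T α) '' (Γ₁ : Set V)))
    (hl : l = h₀ᗮ)
    (hspan : Submodule.span ℝ (Γ₁ : Set V) ⊔ l = ⊤) :
    (∃! B : V →ₗ[ℝ] V, (∀ α ∈ Γ₁, B α = T α) ∧ (∀ x ∈ l, B x = x)) ∧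
    (∀ B : V →ₗ[ℝ] V, ((∀ α ∈ Γ₁, B α = T α) ∧ (∀ x ∈ l, B x = x)) →
      ∀ x y : V, ⟪B x, B y⟫ = ⟪x, y⟫) := by
  classical
  -- the spanning set Γ₁ ∪ l
  have hspan' : Submodule.span ℝ ((Γ₁ : Set V) ∪ (l : Set V)) = ⊤ := by
    rw [Submodule.span_union, Submodule.span_eq]; exact hspan
  -- cross orthogonality: ⟪T α, x⟫ = ⟪α, x⟫ for x ∈ l
  have hcross : ∀ α ∈ Γ₁, ∀ x ∈ l, ⟪T α, x⟫ = ⟪α, x⟫ := by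
    intro α hα x hx
    have hx' : x ∈ h₀ᗮ := hl ▸ hx
    have hmem : α - T α ∈ h₀ := by
      rw [hh₀]
      exact Submodule.subset_span ⟨α, hα, rfl⟩
    have h0 : ⟪α - T α, x⟫ = 0 := (Submodule.mem_orthogonal h₀ x).mp hx' _ hmem
    rw [inner_sub_left] at h0
    linarith
  -- the linear-combination maps
  set ι := {x : V // x ∈ Γ₁} with hι
  set f₁ : (ι →₀ ℝ) →ₗ[ℝ] V := Finsupp.linearCombination ℝ (fun i : ι => (i : V)) with hf₁
  set f₂ : (ι →₀ ℝ) →ₗ[ℝ] V := Finsupp.linearCombination ℝ (fun i : ι => T (i : V)) with hf₂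
  have happ₁ : ∀ c : ι →₀ ℝ, f₁ c = ∑ i ∈ c.support, c i • (i : V) := fun c => by
    rw [hf₁, Finsupp.linearCombination_apply, Finsupp.sum]
  have happ₂ : ∀ c : ι →₀ ℝ, f₂ c = ∑ i ∈ c.support, c i • T (i : V) := fun c => by
    rw [hf₂, Finsupp.linearCombination_apply, Finsupp.sum]
  -- norms agree
  have hnorm : ∀ c : ι →₀ ℝ, ⟪f₂ c, f₂ c⟫ = ⟪f₁ c, f₁ c⟫ := by
    intro c
    rw [happ₁, happ₂, aux_inner_sum_sum, aux_inner_sum_sum]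
    refine Finset.sum_congr rfl fun i _ => Finset.sum_congr rfl fun j _ => ?_
    rw [hTorth _ i.2 _ j.2]
  -- differences lie in h₀
  have hdiff : ∀ c : ι →₀ ℝ, f₁ c - f₂ c ∈ h₀ := by
    intro c
    rw [happ₁, happ₂, ← Finset.sum_sub_distrib]
    refine Submodule.sum_mem _ fun i _ => ?_
    rw [← smul_sub]
    refine Submodule.smul_mem _ _ ?_
    rw [hh₀]
    exact Submodule.subset_span ⟨(i : V), i.2, rfl⟩
  -- key kernel fact
  have hker : ∀ (c : ι →₀ ℝ) (u : V), u ∈ l → f₁ c + u = 0 → f₂ c + u = 0 := by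
    intro c u hu h
    have hfl : f₁ c ∈ l := by
      have : f₁ c = -u := by linear_combination (norm := module) h
      rw [this]; exact neg_mem hu
    have h1 : ⟪f₁ c - f₂ c, f₁ c⟫ = 0 := by
      have hfl' : f₁ c ∈ h₀ᗮ := hl ▸ hfl
      exact (Submodule.mem_orthogonal h₀ _).mp hfl' _ (hdiff c)
    rw [inner_sub_left] at h1
    have h2 : ⟪f₂ c - f₁ c, f₂ c - f₁ c⟫ = 0 := by
      rw [inner_sub_left, inner_sub_right, inner_sub_right, hnorm c,
        real_inner_comm (f₂ c) (f₁ c)]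
      linarith
    have h3 : f₂ c = f₁ c := by
      have := inner_self_eq_zero (𝕜 := ℝ).mp h2
      linear_combination (norm := module) this
    rw [h3]; exact h
  -- glue maps
  set A : ((ι →₀ ℝ) × l) →ₗ[ℝ] V := f₁.coprod l.subtype with hA
  set F : ((ι →₀ ℝ) × l) →ₗ[ℝ] V := f₂.coprod l.subtype with hF
  have hAsurj : LinearMap.range A = ⊤ := by
    rw [hA, LinearMap.range_coprod, Submodule.range_subtype, hf₁,
      Finsupp.range_linearCombination]
    have : Set.range (fun i : ι => (i : V)) = (Γ₁ : Set V) := Subtype.range_coe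
    rw [this]
    exact hspan
  obtain ⟨g, hg⟩ := A.exists_rightInverse_of_surjective hAsurj
  have hgapp : ∀ v : V, A (g v) = v := fun v => by
    have := congrArg (fun m => m v) hg; simpa using this
  set B : V →ₗ[ℝ] V := F.comp g with hB
  -- master computation lemma
  have hmaster : ∀ (v : V) (c : ι →₀ ℝ) (u : V) (hu : u ∈ l),
      f₁ c + u = v → B v = f₂ c + u := by
    intro v c u hu h
    have hA0 : A (g v - (c, ⟨u, hu⟩)) = 0 := by
      rw [map_sub, hgapp]
      simp only [hA, LinearMap.coprod_apply, Submodule.coe_subtype]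
      rw [h]; abel
    have hF0 : F (g v - (c, ⟨u, hu⟩)) = 0 := by
      have h1 : f₁ ((g v).1 - c) + ((g v).2 - ⟨u, hu⟩ : l) = 0 := by
        simpa [hA, LinearMap.coprod_apply] using hA0
      have h2 := hker ((g v).1 - c) (((g v).2 - ⟨u, hu⟩ : l) : V)
        ((g v).2 - ⟨u, hu⟩ : l).2 h1
      simpa [hF, LinearMap.coprod_apply] using h2
    rw [map_sub] at hF0
    have : F (g v) = F (c, ⟨u, hu⟩) := by linear_combination (norm := module) hF0
    rw [hB, LinearMap.comp_apply, this]
    simp [hF, LinearMap.coprod_apply]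
  -- B has the required properties
  have hBΓ : ∀ α ∈ Γ₁, B α = T α := by
    intro α hα
    have h := hmaster α (Finsupp.single ⟨α, hα⟩ 1) 0 l.zero_mem (by
      simp [hf₁, Finsupp.linearCombination_single])
    simpa [hf₂, Finsupp.linearCombination_single] using h
  have hBl : ∀ x ∈ l, B x = x := by
    intro x hx
    have h := hmaster x 0 x hx (by simp)
    simpa using h
  refine ⟨⟨B, ⟨hBΓ, hBl⟩, ?_⟩, ?_⟩
  · -- uniqueness
    rintro B' ⟨hB'Γ, hB'l⟩
    refine LinearMap.ext_on hspan' fun x hx => ?_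
    rcases hx with hx | hx
    · rw [hB'Γ x hx, hBΓ x hx]
    · rw [hB'l x hx, hBl x hx]
  · -- orthogonality
    rintro B' ⟨hB'Γ, hB'l⟩ x y
    have key : ((innerₗ V).compl₁₂ B' B' : LinearMap.BilinForm ℝ V)
        = innerₗ V := by
      refine LinearMap.ext_on hspan' fun a ha => LinearMap.ext_on hspan' fun b hb => ?_
      simp only [LinearMap.compl₁₂_apply, innerₗ_apply_apply]
      rcases ha with ha | ha <;> rcases hb with hb | hb
      · rw [hB'Γ a ha, hB'Γ b hb]; exact hTorth a ha b hb
      · rw [hB'Γ a ha, hB'l b hb]; exact hcross a ha b hb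
      · rw [hB'l a ha, hB'Γ b hb, real_inner_comm, hcross b hb a ha, real_inner_comm]
      · rw [hB'l a ha, hB'l b hb]
    have := congrFun (congrArg (fun m => fun p q => m p q) key) x
    have h2 := congrFun this y
    simpa using h2
end

section
/- Let α₁, …, α_{2k} (k ≥ 1) be simple roots of type A_{2k}, and let T be the flip α_i ↦ α_{2k+1−i}. Define the orbit sums ᾱ_i = α_i + α_{2k+1−i} for 1 ≤ i ≤ k. Then the Cartan integers c_{ij} = 2(ᾱ_i, ᾱ_j)/(ᾱ_j, ᾱ_j), 1 ≤ i, j ≤ k, form the Cartan matrix of type B_k: c_{ii} = 2, c_{i,i+1} = c_{i+1,i} = −1 for 1 ≤ i ≤ k−2, c_{k−1,k} = −2, c_{k,k−1} = −1, and c_{ij} = 0 when |i − j| ≥ 2. -/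
open scoped RealInnerProductSpace

/-- **Folding `A_{2k}` by the flip gives the Cartan matrix of type `B_k`.**
Let `a 1, …, a (2k)` be simple roots of type `A_{2k}` (`k ≥ 1`), let `T` be the
flip `aᵢ ↦ a_{2k+1-i}`, and let `b i = a i + a (2k+1-i)`, `1 ≤ i ≤ k`, be the
orbit sums.  Then the Cartan integers `c i j = 2 (b i, b j)/(b j, b j)` form
the Cartan matrix of type `B_k`. -/
theorem folded_A_even_is_B
    {V : Type*} [NormedAddCommGroup V] [InnerProductSpace ℝ V]
    {k : ℕ} (hk : 1 ≤ k) (a : ℕ → V)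
    (hGram : ∀ i j, 1 ≤ i → i ≤ 2 * k → 1 ≤ j → j ≤ 2 * k →
      ⟪a i, a j⟫ =
        if i = j then 2 else if i + 1 = j ∨ j + 1 = i then -1 else 0)
    (b : ℕ → V)
    (hb : ∀ i, 1 ≤ i → i ≤ k → b i = a i + a (2 * k + 1 - i))
    (c : ℕ → ℕ → ℝ)
    (hc : ∀ i j, c i j = 2 * ⟪b i, b j⟫ / ⟪b j, b j⟫) :
    (∀ i, 1 ≤ i → i ≤ k → c i i = 2) ∧
    (∀ i, 1 ≤ i → i ≤ k - 2 → c i (i + 1) = -1 ∧ c (i + 1) i = -1) ∧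
    (2 ≤ k → c (k - 1) k = -2 ∧ c k (k - 1) = -1) ∧
    (∀ i j, 1 ≤ i → i ≤ k → 1 ≤ j → j ≤ k → (i + 2 ≤ j ∨ j + 2 ≤ i) →
      c i j = 0) := by
  have key : ∀ i j, 1 ≤ i → i ≤ k → 1 ≤ j → j ≤ k →
      ⟪b i, b j⟫ = if i = j then (if i = k then (2:ℝ) else 4)
        else if i + 1 = j ∨ j + 1 = i then -2 else 0 := by
    intro i j hi1 hik hj1 hjk
    rw [hb i hi1 hik, hb j hj1 hjk, inner_add_left, inner_add_right,
      inner_add_right,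
      hGram i j hi1 (by omega) hj1 (by omega),
      hGram i (2 * k + 1 - j) hi1 (by omega) (by omega) (by omega),
      hGram (2 * k + 1 - i) j (by omega) (by omega) hj1 (by omega),
      hGram (2 * k + 1 - i) (2 * k + 1 - j) (by omega) (by omega) (by omega)
        (by omega)]
    split_ifs <;> first | omega | norm_num
  refine ⟨?_, ?_, ?_, ?_⟩
  · intro i hi1 hik
    rw [hc, key i i hi1 hik hi1 hik]
    split_ifs <;> first | omega | norm_num
  · intro i hi1 hik
    have hik' : i + 1 ≤ k := by omega
    constructor
    · rw [hc, key i (i+1) hi1 (by omega) (by omega) hik',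
        key (i+1) (i+1) (by omega) hik' (by omega) hik']
      split_ifs <;> first | omega | norm_num
    · rw [hc, key (i+1) i (by omega) hik' hi1 (by omega),
        key i i hi1 (by omega) hi1 (by omega)]
      split_ifs <;> first | omega | norm_num
  · intro h2k
    constructor
    · rw [hc, key (k-1) k (by omega) (by omega) (by omega) le_rfl,
        key k k (by omega) le_rfl (by omega) le_rfl]
      split_ifs <;> first | omega | norm_num
    · rw [hc, key k (k-1) (by omega) le_rfl (by omega) (by omega),
        key (k-1) (k-1) (by omega) (by omega) (by omega) (by omega)]
      split_ifs <;> first | omega | norm_num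
  · intro i j hi1 hik hj1 hjk hfar
    rw [hc, key i j hi1 hik hj1 hjk, key j j hj1 hjk hj1 hjk]
    split_ifs <;> first | omega | norm_num
end
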